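/- arXiv:2502.06045 — 4 statements merged into one kernel-verified Lean document; each statement's English description precedes it below -/
import Mathlib

section
/- Let G be a k-graph and F a subgraph of G with matching number \nu(F) < r. Let S \subseteq V(G) be a set such that the link of S in F has matching number greater than (r-1)k. Then the k-graph F' obtained from F by adding all edges of G that contain S still satisfies \nu(F') < r. -/
open Finset

/-- The matching number of a hypergraph: the maximum number of pairwise disjoint edges. -/
noncomputable def matchNum {V : Type*} [DecidableEq V] (H : Finset (Finset V)) : ℕ :=
  sSup {m | ∃ M ⊆ H, (M : Set (Finset V)).Pairwise Disjoint ∧ M.card = m}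

/-- The link of `S` in `G`: the `(k - |S|)`-graph with edges `e \ S` for `e ∈ G`, `S ⊆ e`. -/
def link {V : Type*} [DecidableEq V] (G : Finset (Finset V)) (S : Finset V) :
    Finset (Finset V) :=
  (G.filter (fun e => S ⊆ e)).image (fun e => e \ S)

lemma matchNum_bddAbove {V : Type*} [DecidableEq V] (H : Finset (Finset V)) :
    BddAbove {m | ∃ M ⊆ H, (M : Set (Finset V)).Pairwise Disjoint ∧ M.card = m} := by
  refine ⟨H.card, fun m hm => ?_⟩
  obtain ⟨M, hM, _, hc⟩ := hm
  exact hc ▸ Finset.card_le_card hM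

lemma le_matchNum {V : Type*} [DecidableEq V] {H M : Finset (Finset V)}
    (hM : M ⊆ H) (hd : (M : Set (Finset V)).Pairwise Disjoint) : M.card ≤ matchNum H :=
  le_csSup (matchNum_bddAbove H) ⟨M, hM, hd, rfl⟩

lemma exists_matching {V : Type*} [DecidableEq V] {H : Finset (Finset V)} {m : ℕ}
    (hm : m ≤ matchNum H) :
    ∃ M ⊆ H, (M : Set (Finset V)).Pairwise Disjoint ∧ M.card = m := by
  have hne : {n | ∃ M ⊆ H, (M : Set (Finset V)).Pairwise Disjoint ∧ M.card = n}.Nonempty :=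
    ⟨0, ∅, empty_subset _, by simp, rfl⟩
  have hmem := Nat.sSup_mem hne (matchNum_bddAbove H)
  obtain ⟨M, hMH, hMd, hMc⟩ := hmem
  obtain ⟨M', hM'M, hM'c⟩ := Finset.exists_subset_card_eq (s := M) (n := m) (hMc ▸ hm)
  exact ⟨M', hM'M.trans hMH, hMd.mono (Finset.coe_subset.2 hM'M), hM'c⟩

/-- If `F ⊆ G` has matching number `< r` and `S` is `(r-1)k`-heavy in `F`, then adding to
`F` all edges of `G` containing `S` keeps the matching number `< r`. -/
theorem stmt1 {V : Type*} [DecidableEq V] (k r : ℕ) (hk : 2 ≤ k) (hr : 1 ≤ r)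
    (G F : Finset (Finset V)) (hGk : ∀ e ∈ G, e.card = k) (hFG : F ⊆ G)
    (hν : matchNum F < r) (S : Finset V)
    (hheavy : (r - 1) * k < matchNum (link F S)) :
    matchNum (F ∪ G.filter (fun e => S ⊆ e)) < r := by
  by_contra hcon
  push_neg at hcon
  -- a matching M of size r in F'
  obtain ⟨M, hMsub, hMd, hMc⟩ := exists_matching hcon
  rcases S.eq_empty_or_nonempty with hS | hS
  · -- S = ∅ : link F ∅ = F, and (r-1)*k < matchNum F < r is impossible
    subst hS
    have hlink : link F (∅ : Finset V) = F := by
      simp [link, Finset.sdiff_empty, Finset.filter_true_of_mem, Finset.image_id]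
    rw [hlink] at hheavy
    have h1 : r - 1 ≤ (r - 1) * k := Nat.le_mul_of_pos_right _ (by omega)
    omega
  · -- S ≠ ∅
    -- at most one edge of M lies outside F
    by_cases hMF : M ⊆ F
    · have := le_matchNum hMF hMd
      omega
    · obtain ⟨e₀, he₀M, he₀F⟩ := Finset.not_subset.1 hMF
      have he₀S : S ⊆ e₀ := by
        have := hMsub he₀M
        rcases Finset.mem_union.1 this with h | h
        · exact absurd h he₀F
        · exact (Finset.mem_filter.1 h).2
      have hM₁F : M.erase e₀ ⊆ F := by
        intro e he
        obtain ⟨hne, heM⟩ := Finset.mem_erase.1 he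
        rcases Finset.mem_union.1 (hMsub heM) with h | h
        · exact h
        · exfalso
          have heS : S ⊆ e := (Finset.mem_filter.1 h).2
          have hdis : Disjoint e e₀ := hMd heM he₀M hne
          obtain ⟨v, hv⟩ := hS
          exact (Finset.disjoint_left.1 hdis (heS hv)) (he₀S hv)
      set M₁ := M.erase e₀ with hM₁def
      have hM₁c : M₁.card = r - 1 := by
        rw [hM₁def, Finset.card_erase_of_mem he₀M, hMc]
      -- the union of the edges of M₁
      set U := M₁.biUnion id with hUdef
      have hUcard : U.card ≤ (r - 1) * k := by
        calc U.card ≤ ∑ e ∈ M₁, (id e).card := Finset.card_biUnion_le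
          _ = ∑ e ∈ M₁, e.card := rfl
          _ = ∑ e ∈ M₁, k := by
              refine Finset.sum_congr rfl fun e he => ?_
              exact hGk e (hFG (hM₁F he))
          _ = (r - 1) * k := by rw [Finset.sum_const, hM₁c, smul_eq_mul]
      -- a matching N of size (r-1)k + 1 in the link
      obtain ⟨N, hNsub, hNd, hNc⟩ := exists_matching (show (r - 1) * k + 1 ≤ matchNum (link F S) from hheavy)
      -- some edge of N avoids U
      have hex : ∃ n ∈ N, Disjoint n U := by
        by_contra hno
        push_neg at hno
        have hint : ∀ n ∈ N, (n ∩ U).Nonempty := by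
          intro n hn
          have := hno n hn
          rwa [Finset.not_disjoint_iff_nonempty_inter] at this
        have hNne : N.Nonempty := Finset.card_pos.1 (by omega)
        obtain ⟨n₀, hn₀⟩ := hNne
        obtain ⟨v₀, hv₀⟩ := hint n₀ hn₀
        haveI : Nonempty V := ⟨v₀⟩
        classical
        set f : Finset V → V := fun n =>
          if h : (n ∩ U).Nonempty then h.choose else Classical.arbitrary V with hfdef
        have hmaps : ∀ n ∈ N, f n ∈ U := by
          intro n hn
          have h := hint n hn
          have : f n ∈ n ∩ U := by
            rw [hfdef]; simp only [dif_pos h]; exact h.choose_spec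
          exact (Finset.mem_inter.1 this).2
        have hlt : U.card < N.card := by omega
        obtain ⟨x, hx, y, hy, hxy, hfxy⟩ :=
          Finset.exists_ne_map_eq_of_card_lt_of_maps_to hlt hmaps
        have hfx : f x ∈ x := by
          have h := hint x hx
          have : f x ∈ x ∩ U := by
            rw [hfdef]; simp only [dif_pos h]; exact h.choose_spec
          exact (Finset.mem_inter.1 this).1
        have hfy : f y ∈ y := by
          have h := hint y hy
          have : f y ∈ y ∩ U := by
            rw [hfdef]; simp only [dif_pos h]; exact h.choose_spec
          exact (Finset.mem_inter.1 this).1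
        exact Finset.disjoint_left.1 (hNd hx hy hxy) hfx (hfxy ▸ hfy)
      obtain ⟨n, hnN, hnU⟩ := hex
      -- preimage f₀ ∈ F of n
      obtain ⟨f₀, hf₀, hf₀n⟩ := Finset.mem_image.1 (hNsub hnN)
      obtain ⟨hf₀F, hSf₀⟩ := Finset.mem_filter.1 hf₀
      -- f₀ is disjoint from every edge of M₁
      have hdisj : ∀ e ∈ M₁, Disjoint f₀ e := by
        intro e he
        have heU : e ⊆ U := Finset.subset_biUnion_of_mem id he
        obtain ⟨hne, heM⟩ := Finset.mem_erase.1 he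
        have hSe : Disjoint S e := by
          have h := hMd he₀M heM (Ne.symm hne)
          exact Finset.disjoint_left.2 fun a ha => Finset.disjoint_left.1 h (he₀S ha)
        have hne' : Disjoint n e :=
          Finset.disjoint_left.2 fun a ha => fun hae =>
            Finset.disjoint_left.1 hnU ha (heU hae)
        have hsub : f₀ ⊆ S ∪ n := fun a ha => by
          by_cases haS : a ∈ S
          · exact Finset.mem_union.2 (Or.inl haS)
          · exact Finset.mem_union.2 (Or.inr (hf₀n ▸ Finset.mem_sdiff.2 ⟨ha, haS⟩))
        exact Finset.disjoint_left.2 fun a haf => fun hae => by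
          rcases Finset.mem_union.1 (hsub haf) with h | h
          · exact Finset.disjoint_left.1 hSe h hae
          · exact Finset.disjoint_left.1 hne' h hae
      -- f₀ ∉ M₁ since f₀ is nonempty and disjoint from all of M₁
      have hf₀ne : f₀.Nonempty := by
        rw [← Finset.card_pos, hGk f₀ (hFG hf₀F)]; omega
      have hf₀M₁ : f₀ ∉ M₁ := by
        intro h
        have hbot : f₀ = ∅ := by simpa using hdisj f₀ h
        exact hf₀ne.ne_empty hbot
      -- insert f₀ into M₁ : a matching of size r in F
      have hM'sub : insert f₀ M₁ ⊆ F := by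
        intro e he
        rcases Finset.mem_insert.1 he with h | h
        · exact h ▸ hf₀F
        · exact hM₁F h
      have hM'd : ((insert f₀ M₁ : Finset (Finset V)) : Set (Finset V)).Pairwise Disjoint := by
        rw [Finset.coe_insert]
        refine Set.pairwise_insert.2 ⟨hMd.mono (Finset.coe_subset.2 (Finset.erase_subset _ _)), ?_⟩
        intro e he _
        exact ⟨hdisj e he, (hdisj e he).symm⟩
      have hM'c : (insert f₀ M₁).card = r := by
        rw [Finset.card_insert_of_notMem hf₀M₁, hM₁c]; omega
      have := le_matchNum hM'sub hM'd
      omega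
end

section
/- Let F be a non-k-partite k-graph whose 2-shadow is chordal. Then \partial_2(F) contains a clique X of size k+1, and there exists a subset Y \subseteq X with 3 \leq |Y| \leq k+1 such that Y is contained in no edge of F but every proper subset of Y is contained in some edge of F. -/
open Finset

/-- The 2-shadow of a hypergraph `F`: vertices adjacent iff they lie in a common edge. -/
def shadow2 {V : Type*} (F : Finset (Finset V)) : SimpleGraph V :=
  SimpleGraph.fromRel (fun u v => ∃ e ∈ F, u ∈ e ∧ v ∈ e)

/-- `F` is `k`-partite. -/
def IsKPartite {V : Type*} [DecidableEq V] (k : ℕ) (F : Finset (Finset V)) : Prop :=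
  ∃ c : V → Fin k, ∀ e ∈ F, ∀ i : Fin k, (e.filter (fun v => c v = i)).card = 1

/-- `S` has an induced cycle of length `n`. -/
def HasInducedCycle {V : Type*} (S : SimpleGraph V) (n : ℕ) : Prop :=
  ∃ f : ZMod n → V, Function.Injective f ∧
    ∀ i j : ZMod n, S.Adj (f i) (f j) ↔ (i ≠ j ∧ (j = i + 1 ∨ i = j + 1))

/-- A graph is chordal if it has no induced cycle of length at least 4. -/
def Chordal {V : Type*} (S : SimpleGraph V) : Prop :=
  ∀ n : ℕ, 4 ≤ n → ¬ HasInducedCycle S n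


section Walks

variable {V : Type*} {G : SimpleGraph V}

/-- A walk from `x` to `y` of length `m` whose interior lies in `A`. -/
def GWalk (G : SimpleGraph V) (A : Set V) (x y : V) (m : ℕ) (f : ℕ → V) : Prop :=
  f 0 = x ∧ f m = y ∧ (∀ i, i < m → G.Adj (f i) (f (i+1))) ∧ (∀ i, 0 < i → i < m → f i ∈ A)

lemma gwalk_splice {A : Set V} {x y : V} {m : ℕ} {f : ℕ → V}
    (h : GWalk G A x y m f) {i j : ℕ} (hij : i < j) (hjm : j ≤ m)
    (hadj : G.Adj (f i) (f j)) :
    GWalk G A x y (m - (j - i - 1)) (fun t => if t ≤ i then f t else f (t + (j - i - 1))) := by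
  obtain ⟨h0, hm, hc, hA⟩ := h
  set d := j - i - 1 with hd
  refine ⟨?_, ?_, ?_, ?_⟩
  · simp [h0]
  · have h1 : ¬ (m - d ≤ i) := by omega
    simp only [h1, if_false]
    have h2 : m - d + d = m := by omega
    rw [h2, hm]
  · intro t ht
    dsimp only
    by_cases h1 : t ≤ i
    · by_cases h2 : t + 1 ≤ i
      · rw [if_pos h1, if_pos h2]
        exact hc t (by omega)
      · have hti : t = i := by omega
        subst hti
        rw [if_pos h1, if_neg h2]
        have h3 : t + 1 + d = j := by omega
        rw [h3]
        exact hadj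
    · rw [if_neg h1, if_neg (show ¬ (t + 1 ≤ i) by omega)]
      have h3 : t + 1 + d = t + d + 1 := by omega
      rw [h3]
      exact hc (t + d) (by omega)
  · intro t ht1 ht2
    dsimp only
    by_cases h1 : t ≤ i
    · rw [if_pos h1]; exact hA t ht1 (by omega)
    · rw [if_neg h1]; exact hA (t + d) (by omega) (by omega)

lemma exists_induced_path {A : Set V} {x y : V}
    (hex : ∃ m f, GWalk G A x y m f) (hx : x ∉ A) (hy : y ∉ A) (hxy : x ≠ y) :
    ∃ m f, GWalk G A x y m f ∧ 1 ≤ m ∧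
      (∀ i j, i < j → j ≤ m → f i ≠ f j) ∧
      (∀ i j, i + 1 < j → j ≤ m → ¬ G.Adj (f i) (f j)) := by
  classical
  have hex' : ∃ n, ∃ f, GWalk G A x y n f := hex
  obtain ⟨f, hf⟩ : ∃ f, GWalk G A x y (Nat.find hex') f := Nat.find_spec hex'
  set m := Nat.find hex' with hmdef
  have hmin : ∀ m' , m' < m → ¬ ∃ f, GWalk G A x y m' f := fun m' h => Nat.find_min hex' h
  have hm1 : 1 ≤ m := by
    by_contra h
    have hm0 : m = 0 := by omega
    exact hxy (hf.1.symm.trans (hm0 ▸ hf.2.1))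
  have hchord : ∀ i j, i + 1 < j → j ≤ m → ¬ G.Adj (f i) (f j) := by
    intro i j hij hjm hadj
    have hs := gwalk_splice hf (by omega : i < j) hjm hadj
    exact hmin (m - (j - i - 1)) (by omega) ⟨_, hs⟩
  refine ⟨m, f, hf, hm1, ?_, hchord⟩
  intro i j hij hjm heq
  by_cases hjmeq : j = m
  · subst hjmeq
    rcases Nat.eq_zero_or_pos i with rfl | hi
    · exact hxy ((hf.1.symm.trans heq).trans hf.2.1)
    · exact hy (by rw [← hf.2.1, ← heq]; exact hf.2.2.2 i hi (by omega))
  · have hjm' : j < m := by omega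
    have hadj : G.Adj (f i) (f (j+1)) := heq ▸ hf.2.2.1 j hjm'
    have hs := gwalk_splice hf (show i < j + 1 by omega) (by omega) hadj
    exact hmin (m - (j + 1 - i - 1)) (by omega) ⟨_, hs⟩

lemma two_paths_cycle {A B : Set V} {x y : V}
    (hAB : ∀ u ∈ A, ∀ v ∈ B, ¬ G.Adj u v)
    (hdisj : ∀ u, u ∈ A → u ∈ B → False)
    (hxA : x ∉ A) (hyA : y ∉ A) (hxB : x ∉ B) (hyB : y ∉ B)
    (hxy : x ≠ y) (hnadj : ¬ G.Adj x y)
    {m₁ m₂ : ℕ} {f g : ℕ → V}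
    (h1 : GWalk G A x y m₁ f)
    (h1i : ∀ i j, i < j → j ≤ m₁ → f i ≠ f j)
    (h1c : ∀ i j, i + 1 < j → j ≤ m₁ → ¬ G.Adj (f i) (f j))
    (h2 : GWalk G B x y m₂ g)
    (h2i : ∀ i j, i < j → j ≤ m₂ → g i ≠ g j)
    (h2c : ∀ i j, i + 1 < j → j ≤ m₂ → ¬ G.Adj (g i) (g j)) :
    4 ≤ m₁ + m₂ ∧ HasInducedCycle G (m₁ + m₂) := by
  obtain ⟨f0, fm, fch, fmem⟩ := h1
  obtain ⟨g0, gm, gch, gmem⟩ := h2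
  have hm1 : 2 ≤ m₁ := by
    by_contra h
    interval_cases m₁
    · exact hxy (f0.symm.trans fm)
    · exact hnadj (by rw [← f0, ← fm]; exact fch 0 (by norm_num))
  have hm2 : 2 ≤ m₂ := by
    by_contra h
    interval_cases m₂
    · exact hxy (g0.symm.trans gm)
    · exact hnadj (by rw [← g0, ← gm]; exact gch 0 (by norm_num))
  set n := m₁ + m₂ with hn
  have hn4 : 4 ≤ n := by omega
  refine ⟨hn4, ?_⟩
  haveI : NeZero n := ⟨by omega⟩
  set FF : ℕ → V := fun a => if a ≤ m₁ then f a else g (n - a) with hFF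
  -- consecutiveness for the single paths
  have hcons1 : ∀ a b, a ≤ m₁ → b ≤ m₁ → G.Adj (f a) (f b) → b = a + 1 ∨ a = b + 1 := by
    intro a b ha hb hadj
    rcases lt_trichotomy a b with h | h | h
    · left; by_contra hc; exact h1c a b (by omega) hb hadj
    · exact absurd (h ▸ hadj) (G.loopless.irrefl _)
    · right; by_contra hc; exact h1c b a (by omega) ha hadj.symm
  have hcons2 : ∀ a b, a ≤ m₂ → b ≤ m₂ → G.Adj (g a) (g b) → b = a + 1 ∨ a = b + 1 := by
    intro a b ha hb hadj
    rcases lt_trichotomy a b with h | h | h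
    · left; by_contra hc; exact h2c a b (by omega) hb hadj
    · exact absurd (h ▸ hadj) (G.loopless.irrefl _)
    · right; by_contra hc; exact h2c b a (by omega) ha hadj.symm
  -- values of FF
  have hFf : ∀ a, a ≤ m₁ → FF a = f a := fun a ha => if_pos ha
  have hFg : ∀ a, m₁ < a → FF a = g (n - a) := fun a ha => if_neg (by omega)
  have hFx : FF 0 = x := by rw [hFf 0 (by omega), f0]
  have hFy : FF m₁ = y := by rw [hFf m₁ le_rfl, fm]
  have hmemA : ∀ a, 0 < a → a < m₁ → FF a ∈ A := by
    intro a h1 h2; rw [hFf a (by omega)]; exact fmem a h1 h2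
  have hmemB : ∀ a, m₁ < a → a < n → FF a ∈ B := by
    intro a h1 h2; rw [hFg a h1]; exact gmem (n - a) (by omega) (by omega)
  -- injectivity on [0, n)
  have hinj : ∀ a b, a < b → b < n → FF a ≠ FF b := by
    intro a b hab hbn
    by_cases hb1 : b ≤ m₁
    · rw [hFf a (by omega), hFf b hb1]; exact h1i a b hab hb1
    · push_neg at hb1
      rw [hFg b hb1]
      by_cases ha1 : a ≤ m₁
      · rw [hFf a ha1]
        rcases Nat.eq_zero_or_pos a with rfl | hapos
        · rw [f0, ← g0]
          exact h2i 0 (n - b) (by omega) (by omega)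
        · rcases Nat.lt_or_ge a m₁ with ham | ham
          · intro heq
            exact hdisj _ (fmem a hapos ham) (heq ▸ gmem (n - b) (by omega) (by omega))
          · have haeq : a = m₁ := by omega
            subst haeq
            rw [fm, ← gm]
            intro heq
            exact h2i (n - b) m₂ (by omega) le_rfl heq.symm
      · push_neg at ha1
        rw [hFg a ha1]
        exact fun heq => h2i (n - b) (n - a) (by omega) (by omega) heq.symm
  -- adjacency: mixed case helper (a on f-side, b strictly on g-side)
  have hmix : ∀ a b, a ≤ m₁ → m₁ < b → b < n → G.Adj (FF a) (FF b) →
      b = (a + 1) % n ∨ a = (b + 1) % n := by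
    intro a b ha hb hbn hadj
    rw [hFg b hb] at hadj
    have hc1 : 1 ≤ n - b := by omega
    have hc2 : n - b ≤ m₂ - 1 := by omega
    rcases Nat.eq_zero_or_pos a with rfl | hapos
    · rw [hFx, ← g0] at hadj
      rcases hcons2 0 (n - b) (by omega) (by omega) hadj with h | h
      · right
        have hb' : b = n - 1 := by omega
        subst hb'
        have : n - 1 + 1 = n := by omega
        rw [this, Nat.mod_self]
      · omega
    · rcases Nat.lt_or_ge a m₁ with ham | ham
      · rw [hFf a ha] at hadj
        exact absurd hadj (hAB _ (fmem a hapos ham) _ (gmem (n - b) (by omega) (by omega)))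
      · have haeq : a = m₁ := by omega
        subst haeq
        rw [hFy, ← gm] at hadj
        rcases hcons2 m₂ (n - b) (by omega) (by omega) hadj with h | h
        · omega
        · left
          have hb' : b = a + 1 := by omega
          rw [hb', Nat.mod_eq_of_lt (by omega)]
  -- full numeric adjacency characterization
  have hnum : ∀ a b, a < n → b < n →
      (G.Adj (FF a) (FF b) ↔ (b = (a + 1) % n ∨ a = (b + 1) % n)) := by
    intro a b han hbn
    constructor
    · intro hadj
      by_cases ha1 : a ≤ m₁
      · by_cases hb1 : b ≤ m₁
        · rw [hFf a ha1, hFf b hb1] at hadj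
          rcases hcons1 a b ha1 hb1 hadj with h | h
          · left; rw [h, Nat.mod_eq_of_lt (by omega)]
          · right; rw [h, Nat.mod_eq_of_lt (by omega)]
        · exact hmix a b ha1 (by omega) hbn hadj
      · by_cases hb1 : b ≤ m₁
        · exact (hmix b a hb1 (by omega) han hadj.symm).symm
        · push_neg at ha1 hb1
          rw [hFg a ha1, hFg b hb1] at hadj
          rcases hcons2 (n - a) (n - b) (by omega) (by omega) hadj with h | h
          · right
            have : a = b + 1 := by omega
            rw [this, Nat.mod_eq_of_lt (by omega)]
          · left
            have : b = a + 1 := by omega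
            rw [this, Nat.mod_eq_of_lt (by omega)]
    · -- backward: it suffices to handle b = (a+1) % n
      have hback : ∀ a b, a < n → b < n → b = (a + 1) % n → G.Adj (FF a) (FF b) := by
        intro a b han hbn hb
        rcases Nat.lt_or_ge (a + 1) n with hlt | hge
        · rw [Nat.mod_eq_of_lt hlt] at hb
          subst hb
          by_cases hb1 : a + 1 ≤ m₁
          · rw [hFf a (by omega), hFf (a+1) hb1]
            exact fch a (by omega)
          · rcases Nat.lt_or_ge m₁ a with ham | ham
            · rw [hFg a ham, hFg (a+1) (by omega)]
              have h3 : n - a = (n - (a+1)) + 1 := by omega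
              rw [h3]
              exact (gch (n - (a+1)) (by omega)).symm
            · have haeq : a = m₁ := by omega
              subst haeq
              rw [hFy, hFg (a+1) (by omega), ← gm]
              have h3 : m₂ = (n - (a+1)) + 1 := by omega
              rw [h3]
              exact (gch (n - (a+1)) (by omega)).symm
        · have hna : a + 1 = n := by omega
          have hb0 : b = 0 := by rw [hb, hna, Nat.mod_self]
          subst hb0
          rw [hFx, ← g0, hFg a (by omega)]
          have h3 : n - a = 1 := by omega
          rw [h3]
          exact (gch 0 (by omega)).symm
      rintro (h | h)
      · exact hback a b han hbn h
      · exact (hback b a hbn han h).symm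
  -- assemble the induced cycle
  refine ⟨fun i => FF i.val, ?_, ?_⟩
  · intro i j hij
    by_contra hne
    have hv : i.val ≠ j.val := fun h => hne (ZMod.val_injective n h)
    rcases lt_or_gt_of_ne hv with h | h
    · exact hinj i.val j.val h (ZMod.val_lt j) hij
    · exact hinj j.val i.val h (ZMod.val_lt i) hij.symm
  · intro i j
    have hiv := ZMod.val_lt i
    have hjv := ZMod.val_lt j
    have e1 : ∀ i j : ZMod n, (j = i + 1) ↔ (j.val = (i.val + 1) % n) := by
      intro i j
      constructor
      · rintro rfl
        rw [ZMod.val_add, ZMod.val_one_eq_one_mod, Nat.mod_eq_of_lt (show (1:ℕ) < n by omega)]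
      · intro h
        apply ZMod.val_injective n
        rw [h, ZMod.val_add, ZMod.val_one_eq_one_mod, Nat.mod_eq_of_lt (show (1:ℕ) < n by omega)]
    rw [hnum i.val j.val hiv hjv]
    constructor
    · rintro (h | h)
      · refine ⟨?_, Or.inl ((e1 i j).mpr h)⟩
        intro heq
        subst heq
        rcases Nat.lt_or_ge (i.val + 1) n with h' | h'
        · rw [Nat.mod_eq_of_lt h'] at h; omega
        · have : i.val + 1 = n := by omega
          rw [this, Nat.mod_self] at h; omega
      · refine ⟨?_, Or.inr ((e1 j i).mpr h)⟩
        intro heq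
        subst heq
        rcases Nat.lt_or_ge (i.val + 1) n with h' | h'
        · rw [Nat.mod_eq_of_lt h'] at h; omega
        · have : i.val + 1 = n := by omega
          rw [this, Nat.mod_self] at h; omega
    · rintro ⟨hne, h | h⟩
      · exact Or.inl ((e1 i j).mp h)
      · exact Or.inr ((e1 j i).mp h)

end Walks

section Reach
variable {V : Type*} {G : SimpleGraph V} [DecidableEq V]

def Reach (G : SimpleGraph V) (s : Finset V) : V → V → Prop :=
  Relation.ReflTransGen (fun u v => G.Adj u v ∧ u ∈ s ∧ v ∈ s)

lemma reach_symm {s : Finset V} {u v : V} (h : Reach G s u v) : Reach G s v u :=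
  (@Relation.ReflTransGen.stdSymm _ _ ⟨fun _ _ hab => ⟨hab.1.symm, hab.2.2, hab.2.1⟩⟩).symm _ _ h

lemma reach_gwalk {s : Finset V} {u w : V} (hu : u ∈ s) (h : Reach G s u w) :
    ∃ (m : ℕ) (fn : ℕ → V), fn 0 = u ∧ fn m = w ∧ (∀ i, i < m → G.Adj (fn i) (fn (i+1))) ∧
      (∀ i, i ≤ m → fn i ∈ s ∧ Reach G s u (fn i)) := by
  induction h with
  | refl => exact ⟨0, fun _ => u, rfl, rfl, by omega, fun i _ => ⟨hu, Relation.ReflTransGen.refl⟩⟩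
  | @tail b' c' hb hstep ih =>
    obtain ⟨m, fn, h0, hm, hc, hmem⟩ := ih
    refine ⟨m+1, fun t => if t ≤ m then fn t else c', ?_, ?_, ?_, ?_⟩
    · simpa using h0
    · simp
    · intro i hi
      dsimp only
      by_cases h1 : i ≤ m
      · by_cases h2 : i + 1 ≤ m
        · rw [if_pos h1, if_pos h2]; exact hc i (by omega)
        · have : i = m := by omega
          subst this
          rw [if_pos h1, if_neg h2, hm]
          exact hstep.1
      · omega
    · intro i hi
      dsimp only
      by_cases h1 : i ≤ m
      · rw [if_pos h1]; exact hmem i h1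
      · rw [if_neg h1]
        exact ⟨hstep.2.2, hb.tail hstep⟩

lemma no_reach_pair {U : Finset V} {a b : V} (hU : U ⊆ ({a, b} : Finset V))
    (hab : a ≠ b) (hnadj : ¬ G.Adj a b) (h : Reach G U a b) : False := by
  rcases Relation.ReflTransGen.cases_head h with heq | ⟨c, hc, _⟩
  · exact hab heq
  · have hcU := hU hc.2.2
    simp only [Finset.mem_insert, Finset.mem_singleton] at hcU
    rcases hcU with rfl | rfl
    · exact G.loopless.irrefl _ hc.1
    · exact hnadj hc.1

/-- Every vertex of a minimum separator has a neighbor in the component of `a`. -/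
lemma sep_neighbor {s T : Finset V} {a b t : V} (ha : a ∈ s)
    (hPa : a ∉ T) (hPb : b ∉ T) (hTs : T ⊆ s) (hsep : ¬ Reach G (s \ T) a b)
    (hmin : ∀ T', T' ⊆ s → a ∉ T' → b ∉ T' → ¬ Reach G (s \ T') a b → T.card ≤ T'.card)
    (ht : t ∈ T) :
    ∃ u, u ∈ s \ T ∧ Reach G (s \ T) a u ∧ G.Adj t u := by
  classical
  by_contra hno
  push_neg at hno
  set T' := T.erase t with hT'
  have hsep' : ¬ Reach G (s \ T') a b := by
    intro hr
    have hclaim : ∀ u, Reach G (s \ T') a u → (u ∈ s \ T ∧ Reach G (s \ T) a u) := by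
      intro u hu
      induction hu with
      | refl => exact ⟨Finset.mem_sdiff.mpr ⟨ha, hPa⟩, Relation.ReflTransGen.refl⟩
      | @tail b' c' h1 h2 ih =>
        by_cases hcT : c' ∈ T
        · have hct : c' = t := by
            have := (Finset.mem_sdiff.mp h2.2.2).2
            rw [hT', Finset.mem_erase] at this
            push_neg at this
            by_contra hne
            exact this hne hcT
          exfalso
          exact hno _ ih.1 ih.2 (by rw [← hct]; exact h2.1.symm)
        · have hmem : c' ∈ s \ T := Finset.mem_sdiff.mpr ⟨(Finset.mem_sdiff.mp h2.2.2).1, hcT⟩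
          exact ⟨hmem, ih.2.tail ⟨h2.1, ih.1, hmem⟩⟩
    exact hsep (hclaim b hr).2
  have hcard := hmin T' (fun x hx => hTs (Finset.erase_subset _ _ hx))
    (fun hx => hPa (Finset.erase_subset _ _ hx)) (fun hx => hPb (Finset.erase_subset _ _ hx)) hsep'
  have hc2 : T'.card = T.card - 1 := by rw [hT']; exact Finset.card_erase_of_mem ht
  have hpos : 0 < T.card := Finset.card_pos.mpr ⟨t, ht⟩
  omega

end Reach

section Key
variable {V : Type*} {G : SimpleGraph V} [DecidableEq V]

def Simpl (G : SimpleGraph V) (s : Finset V) (v : V) : Prop :=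
  ∀ x ∈ s, ∀ y ∈ s, G.Adj v x → G.Adj v y → x ≠ y → G.Adj x y

lemma key (hch : Chordal G) :
    ∀ s : Finset V, ∀ a b : V, a ∈ s → b ∈ s → a ≠ b → ¬ G.Adj a b →
      ∃ v w, v ∈ s ∧ w ∈ s ∧ v ≠ w ∧ ¬ G.Adj v w ∧ Simpl G s v ∧ Simpl G s w := by
  classical
  intro s
  induction s using Finset.strongInduction with
  | _ s ih =>
  intro a b ha hb hab hnadj
  set 𝒯 := s.powerset.filter (fun T => a ∉ T ∧ b ∉ T ∧ ¬ Reach G (s \ T) a b) with h𝒯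
  have hT0 : (s \ {a, b}) ∈ 𝒯 := by
    rw [h𝒯, Finset.mem_filter, Finset.mem_powerset]
    refine ⟨Finset.sdiff_subset, by simp, by simp, ?_⟩
    intro hr
    refine no_reach_pair (U := s \ (s \ {a, b})) ?_ hab hnadj hr
    intro x hx
    simp only [Finset.mem_sdiff, not_and, not_not] at hx
    exact hx.2 hx.1
  obtain ⟨T, hTmem, hTmin⟩ := Finset.exists_min_image 𝒯 Finset.card ⟨_, hT0⟩
  rw [h𝒯, Finset.mem_filter, Finset.mem_powerset] at hTmem
  obtain ⟨hTs, hPa, hPb, hsep⟩ := hTmem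
  have hmin : ∀ T', T' ⊆ s → a ∉ T' → b ∉ T' → ¬ Reach G (s \ T') a b → T.card ≤ T'.card := by
    intro T' h1 h2 h3 h4
    exact hTmin T' (by rw [h𝒯, Finset.mem_filter, Finset.mem_powerset]; exact ⟨h1, h2, h3, h4⟩)
  set W := s \ T with hW
  set A := W.filter (fun u => Reach G W a u) with hA
  set B := W.filter (fun u => Reach G W b u) with hB
  have haW : a ∈ W := Finset.mem_sdiff.mpr ⟨ha, hPa⟩
  have hbW : b ∈ W := Finset.mem_sdiff.mpr ⟨hb, hPb⟩
  have haA : a ∈ A := Finset.mem_filter.mpr ⟨haW, Relation.ReflTransGen.refl⟩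
  have hbB : b ∈ B := Finset.mem_filter.mpr ⟨hbW, Relation.ReflTransGen.refl⟩
  have hbA : b ∉ A := fun h => hsep (Finset.mem_filter.mp h).2
  have haB : a ∉ B := fun h => hsep (reach_symm (Finset.mem_filter.mp h).2)
  have hdisj : ∀ u, u ∈ A → u ∈ B → False := by
    intro u hu1 hu2
    exact hsep ((Finset.mem_filter.mp hu1).2.trans (reach_symm (Finset.mem_filter.mp hu2).2))
  have habAdj : ∀ u ∈ A, ∀ v ∈ B, ¬ G.Adj u v := by
    intro u hu v hv hadj
    obtain ⟨huW, hru⟩ := Finset.mem_filter.mp hu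
    obtain ⟨hvW, hrv⟩ := Finset.mem_filter.mp hv
    exact hsep ((hru.tail ⟨hadj, huW, hvW⟩).trans (reach_symm hrv))
  have hNA : ∀ u ∈ A, ∀ z ∈ s, G.Adj u z → z ∈ A ∪ T := by
    intro u hu z hz hadj
    by_cases hzT : z ∈ T
    · exact Finset.mem_union_right _ hzT
    · obtain ⟨huW, hru⟩ := Finset.mem_filter.mp hu
      have hzW : z ∈ W := Finset.mem_sdiff.mpr ⟨hz, hzT⟩
      exact Finset.mem_union_left _ (Finset.mem_filter.mpr ⟨hzW, hru.tail ⟨hadj, huW, hzW⟩⟩)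
  have hNB : ∀ u ∈ B, ∀ z ∈ s, G.Adj u z → z ∈ B ∪ T := by
    intro u hu z hz hadj
    by_cases hzT : z ∈ T
    · exact Finset.mem_union_right _ hzT
    · obtain ⟨huW, hru⟩ := Finset.mem_filter.mp hu
      have hzW : z ∈ W := Finset.mem_sdiff.mpr ⟨hz, hzT⟩
      exact Finset.mem_union_left _ (Finset.mem_filter.mpr ⟨hzW, hru.tail ⟨hadj, huW, hzW⟩⟩)
  have hAW : A ⊆ W := Finset.filter_subset _ _
  have hBW : B ⊆ W := Finset.filter_subset _ _
  have hAs : A ⊆ s := fun x hx => (Finset.mem_sdiff.mp (hAW hx)).1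
  have hBs : B ⊆ s := fun x hx => (Finset.mem_sdiff.mp (hBW hx)).1
  have hAT : ∀ x ∈ A, x ∉ T := fun x hx => (Finset.mem_sdiff.mp (hAW hx)).2
  have hBT : ∀ x ∈ B, x ∉ T := fun x hx => (Finset.mem_sdiff.mp (hBW hx)).2
  have hsepB : ¬ Reach G (s \ T) b a := fun h => hsep (reach_symm h)
  have hminB : ∀ T', T' ⊆ s → b ∉ T' → a ∉ T' → ¬ Reach G (s \ T') b a → T.card ≤ T'.card :=
    fun T' h1 h2 h3 h4 => hmin T' h1 h3 h2 (fun h => h4 (reach_symm h))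
  have hTnA : ∀ t ∈ T, ∃ u, u ∈ A ∧ G.Adj t u := by
    intro t ht
    obtain ⟨u, hu1, hu2, hu3⟩ := sep_neighbor ha hPa hPb hTs hsep hmin ht
    exact ⟨u, Finset.mem_filter.mpr ⟨hu1, hu2⟩, hu3⟩
  have hTnB : ∀ t ∈ T, ∃ u, u ∈ B ∧ G.Adj t u := by
    intro t ht
    obtain ⟨u, hu1, hu2, hu3⟩ := sep_neighbor hb hPb hPa hTs hsepB hminB ht
    exact ⟨u, Finset.mem_filter.mpr ⟨hu1, hu2⟩, hu3⟩
  -- a generic construction of a walk through a component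
  have hwalk : ∀ (C : Finset V) (x y : V), (∃ u, u ∈ C ∧ G.Adj x u) → (∃ u, u ∈ C ∧ G.Adj y u) →
      (∀ u ∈ C, ∀ v ∈ C, Reach G W u v) →
      (∀ u ∈ C, ∀ z, z ∈ W → Reach G W u z → z ∈ C) → C ⊆ W →
      ∃ m f, GWalk G (fun v => v ∈ C) x y m f := by
    intro C x y hxn hyn hconn hclosed hCW
    obtain ⟨u, huC, hadju⟩ := hxn
    obtain ⟨u', hu'C, hadju'⟩ := hyn
    obtain ⟨m, fn, h0, hm, hc, hmem⟩ := reach_gwalk (hCW huC) (hconn u huC u' hu'C)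
    have hmemC : ∀ i, i ≤ m → fn i ∈ C := by
      intro i hi
      exact hclosed u huC _ (hmem i hi).1 (hmem i hi).2
    refine ⟨m + 2, fun t => if t = 0 then x else if t ≤ m + 1 then fn (t - 1) else y,
      ?_, ?_, ?_, ?_⟩
    · simp
    · dsimp only
      rw [if_neg (by omega), if_neg (by omega)]
    · intro i hi
      dsimp only
      rcases Nat.eq_zero_or_pos i with rfl | hipos
      · rw [if_pos rfl, if_neg (by omega), if_pos (by omega)]
        simpa [h0] using hadju
      · by_cases him : i ≤ m
        · rw [if_neg (by omega), if_pos (by omega), if_neg (by omega), if_pos (by omega)]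
          have h3 := hc (i - 1) (by omega)
          rw [show i + 1 - 1 = i - 1 + 1 by omega]
          exact h3
        · have hieq : i = m + 1 := by omega
          subst hieq
          rw [if_neg (by omega), if_pos (by omega), if_neg (by omega), if_neg (by omega)]
          rw [show m + 1 - 1 = m by omega, hm]
          exact hadju'.symm
    · intro t ht1 ht2
      dsimp only
      rw [if_neg (by omega), if_pos (by omega)]
      exact hmemC (t - 1) (by omega)
  -- T is a clique
  have hTclq : ∀ x ∈ T, ∀ y ∈ T, x ≠ y → G.Adj x y := by
    intro x hx y hy hxy
    by_contra hnxy
    have hconnA : ∀ u ∈ A, ∀ v ∈ A, Reach G W u v := by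
      intro u hu v hv
      exact (reach_symm (Finset.mem_filter.mp hu).2).trans (Finset.mem_filter.mp hv).2
    have hclosedA : ∀ u ∈ A, ∀ z, z ∈ W → Reach G W u z → z ∈ A := by
      intro u hu z hzW hr
      exact Finset.mem_filter.mpr ⟨hzW, (Finset.mem_filter.mp hu).2.trans hr⟩
    have hconnB : ∀ u ∈ B, ∀ v ∈ B, Reach G W u v := by
      intro u hu v hv
      exact (reach_symm (Finset.mem_filter.mp hu).2).trans (Finset.mem_filter.mp hv).2
    have hclosedB : ∀ u ∈ B, ∀ z, z ∈ W → Reach G W u z → z ∈ B := by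
      intro u hu z hzW hr
      exact Finset.mem_filter.mpr ⟨hzW, (Finset.mem_filter.mp hu).2.trans hr⟩
    obtain ⟨m₁, f, hf, hm₁, hfi, hfc⟩ :=
      exists_induced_path (hwalk A x y (hTnA x hx) (hTnA y hy) hconnA hclosedA hAW)
        (fun h => hAT x h hx) (fun h => hAT y h hy) hxy
    obtain ⟨m₂, g, hg, hm₂, hgi, hgc⟩ :=
      exists_induced_path (hwalk B x y (hTnB x hx) (hTnB y hy) hconnB hclosedB hBW)
        (fun h => hBT x h hx) (fun h => hBT y h hy) hxy
    obtain ⟨h4, hcyc⟩ := two_paths_cycle (A := fun v => v ∈ A) (B := fun v => v ∈ B)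
      habAdj hdisj (fun h => hAT x h hx) (fun h => hAT y h hy)
      (fun h => hBT x h hx) (fun h => hBT y h hy) hxy hnxy
      hf hfi hfc hg hgi hgc
    exact hch _ h4 hcyc
  -- recursion into the two sides
  have hrec : ∀ (C : Finset V) (c₀ : V), c₀ ∈ C → C ⊆ W →
      (∀ u ∈ C, ∀ z ∈ s, G.Adj u z → z ∈ C ∪ T) → (C ∪ T) ⊂ s →
      ∃ v, v ∈ C ∧ Simpl G s v := by
    intro C c₀ hc₀ hCW hNC hss
    have hlift : ∀ v ∈ C, Simpl G (C ∪ T) v → Simpl G s v := by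
      intro v hv hsimp x hxs y hys hax hay hxy
      exact hsimp x (hNC v hv x hxs hax) y (hNC v hv y hys hay) hax hay hxy
    by_cases hclq : ∀ u ∈ C ∪ T, ∀ z ∈ C ∪ T, u ≠ z → G.Adj u z
    · refine ⟨c₀, hc₀, hlift c₀ hc₀ ?_⟩
      intro x hx y hy _ _ hxy
      exact hclq x hx y hy hxy
    · push_neg at hclq
      obtain ⟨u, hu, z, hz, huz, hnuz⟩ := hclq
      obtain ⟨v, w, hvm, hwm, hvw, hnvw, hsv, hsw⟩ := ih (C ∪ T) hss u z hu hz huz hnuz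
      have hvw' : v ∈ C ∨ w ∈ C := by
        rcases Finset.mem_union.mp hvm with h | h
        · exact Or.inl h
        · rcases Finset.mem_union.mp hwm with h' | h'
          · exact Or.inr h'
          · exact absurd (hTclq v h w h' hvw) hnvw
      rcases hvw' with h | h
      · exact ⟨v, h, hlift v h hsv⟩
      · exact ⟨w, h, hlift w h hsw⟩
  have hssA : A ∪ T ⊂ s := by
    rw [Finset.ssubset_iff_of_subset (Finset.union_subset hAs hTs)]
    exact ⟨b, hb, by rw [Finset.mem_union]; push_neg; exact ⟨hbA, hPb⟩⟩
  have hssB : B ∪ T ⊂ s := by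
    rw [Finset.ssubset_iff_of_subset (Finset.union_subset hBs hTs)]
    exact ⟨a, ha, by rw [Finset.mem_union]; push_neg; exact ⟨haB, hPa⟩⟩
  obtain ⟨v, hvA, hsv⟩ := hrec A a haA hAW hNA hssA
  obtain ⟨w, hwB, hsw⟩ := hrec B b hbB hBW hNB hssB
  refine ⟨v, w, hAs hvA, hBs hwB, ?_, habAdj v hvA w hwB, hsv, hsw⟩
  intro heq
  exact hdisj v hvA (heq ▸ hwB)
end Key

section Color
variable {V : Type*} {G : SimpleGraph V} [DecidableEq V]

lemma exists_simplicial (hch : Chordal G) (s : Finset V) (hs : s.Nonempty) :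
    ∃ v ∈ s, Simpl G s v := by
  classical
  by_cases hclq : ∀ x ∈ s, ∀ y ∈ s, x ≠ y → G.Adj x y
  · obtain ⟨v, hv⟩ := hs
    exact ⟨v, hv, fun x hx y hy _ _ hxy => hclq x hx y hy hxy⟩
  · push_neg at hclq
    obtain ⟨aa, haa, bb, hbb, hne, hnadj⟩ := hclq
    obtain ⟨v, w, hv, _, _, _, hsv, _⟩ := key hch s aa bb haa hbb hne hnadj
    exact ⟨v, hv, hsv⟩

lemma colorable [Fintype V] (hch : Chordal G) {k : ℕ} (hk : 1 ≤ k)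
    (hclq : ∀ t : Finset V, (∀ x ∈ t, ∀ y ∈ t, x ≠ y → G.Adj x y) → t.card ≤ k) :
    ∃ c : V → Fin k, ∀ u v, G.Adj u v → c u ≠ c v := by
  classical
  suffices h : ∀ s : Finset V, ∃ c : V → Fin k, ∀ u ∈ s, ∀ v ∈ s, G.Adj u v → c u ≠ c v by
    obtain ⟨c, hc⟩ := h Finset.univ
    exact ⟨c, fun u v h' => hc u (Finset.mem_univ u) v (Finset.mem_univ v) h'⟩
  intro s
  induction s using Finset.strongInduction with
  | _ s ih =>
  rcases s.eq_empty_or_nonempty with rfl | hne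
  · exact ⟨fun _ => ⟨0, hk⟩, by simp⟩
  obtain ⟨v, hv, hsv⟩ := exists_simplicial hch s hne
  obtain ⟨c, hc⟩ := ih (s.erase v) (Finset.erase_ssubset hv)
  set N := (s.erase v).filter (G.Adj v) with hN
  have hvN : v ∉ N := fun h => (Finset.mem_erase.mp (Finset.mem_filter.mp h).1).1 rfl
  have hNs : N ⊆ s := fun x hx => Finset.erase_subset _ _ (Finset.mem_filter.mp hx).1
  have hclique : (insert v N).card ≤ k := by
    apply hclq
    intro x hx y hy hxy
    rcases Finset.mem_insert.mp hx with rfl | hx'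
    · rcases Finset.mem_insert.mp hy with rfl | hy'
      · exact absurd rfl hxy
      · exact (Finset.mem_filter.mp hy').2
    · rcases Finset.mem_insert.mp hy with rfl | hy'
      · exact (Finset.mem_filter.mp hx').2.symm
      · exact hsv x (hNs hx') y (hNs hy') (Finset.mem_filter.mp hx').2
          (Finset.mem_filter.mp hy').2 hxy
  have hNcard : N.card ≤ k - 1 := by
    have := Finset.card_insert_of_notMem hvN
    omega
  obtain ⟨i, hi⟩ : ∃ i : Fin k, i ∉ N.image c := by
    by_contra h
    push_neg at h
    have h1 : (Finset.univ : Finset (Fin k)) ⊆ N.image c := fun i _ => h i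
    have h2 := Finset.card_le_card h1
    have h3 := Finset.card_image_le (s := N) (f := c)
    simp only [Finset.card_univ, Fintype.card_fin] at h2
    omega
  refine ⟨Function.update c v i, ?_⟩
  intro x hx y hy hadj
  by_cases hxv : x = v
  · subst hxv
    by_cases hyv : y = x
    · exact absurd (hyv ▸ hadj) (G.loopless.irrefl _)
    · have hyN : y ∈ N := Finset.mem_filter.mpr ⟨Finset.mem_erase.mpr ⟨hyv, hy⟩, hadj⟩
      rw [Function.update_self, Function.update_of_ne hyv]
      intro heq
      exact hi (heq ▸ Finset.mem_image_of_mem c hyN)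
  · by_cases hyv : y = v
    · subst hyv
      have hxN : x ∈ N := Finset.mem_filter.mpr ⟨Finset.mem_erase.mpr ⟨hxv, hx⟩, hadj.symm⟩
      rw [Function.update_self, Function.update_of_ne hxv]
      intro heq
      exact hi (heq.symm ▸ Finset.mem_image_of_mem c hxN)
    · rw [Function.update_of_ne hxv, Function.update_of_ne hyv]
      exact hc x (Finset.mem_erase.mpr ⟨hxv, hx⟩) y (Finset.mem_erase.mpr ⟨hyv, hy⟩) hadj

end Color

/-- If `F` is a non-`k`-partite `k`-graph whose 2-shadow is chordal, then the 2-shadow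
contains a clique `X` of size `k+1`, and there is `Y ⊆ X` with `3 ≤ |Y| ≤ k+1` such that
`Y` is contained in no edge of `F` but every proper subset of `Y` is. -/
theorem stmt8 {V : Type*} [Fintype V] [DecidableEq V] (k : ℕ) (hk : 2 ≤ k)
    (F : Finset (Finset V)) (hFk : ∀ e ∈ F, e.card = k)
    (hnp : ¬ IsKPartite k F) (hch : Chordal (shadow2 F)) :
    ∃ X : Finset V, (shadow2 F).IsNClique (k + 1) X ∧
      ∃ Y ⊆ X, 3 ≤ Y.card ∧ Y.card ≤ k + 1 ∧
        (∀ e ∈ F, ¬ Y ⊆ e) ∧ (∀ Z ⊂ Y, ∃ e ∈ F, Z ⊆ e) := by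
  classical
  set G := shadow2 F with hG
  have hadj : ∀ u v : V, G.Adj u v ↔ (u ≠ v ∧ ∃ e ∈ F, u ∈ e ∧ v ∈ e) := by
    intro u v
    rw [hG, shadow2, SimpleGraph.fromRel_adj]
    constructor
    · rintro ⟨hne, h | h⟩
      · exact ⟨hne, h⟩
      · obtain ⟨e, he, h1, h2⟩ := h
        exact ⟨hne, e, he, h2, h1⟩
    · rintro ⟨hne, h⟩
      exact ⟨hne, Or.inl h⟩
  -- Step 1: a clique of size k+1
  have hX : ∃ X : Finset V, G.IsNClique (k + 1) X := by
    by_contra hno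
    push_neg at hno
    have hbound : ∀ t : Finset V, (∀ x ∈ t, ∀ y ∈ t, x ≠ y → G.Adj x y) → t.card ≤ k := by
      intro t ht
      by_contra hcard
      push_neg at hcard
      obtain ⟨t', ht', hcard'⟩ := Finset.exists_subset_card_eq (s := t) (n := k + 1) (by omega)
      refine hno t' ⟨?_, hcard'⟩
      intro x hx y hy hxy
      exact ht x (ht' hx) y (ht' hy) hxy
    obtain ⟨c, hc⟩ := colorable hch (by omega) hbound
    apply hnp
    refine ⟨c, ?_⟩
    intro e he i
    have hinj : ∀ x ∈ e, ∀ y ∈ e, c x = c y → x = y := by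
      intro x hx y hy hcxy
      by_contra hne
      exact hc x y ((hadj x y).mpr ⟨hne, e, he, hx, hy⟩) hcxy
    have himg : e.image c = Finset.univ := by
      apply Finset.eq_univ_of_card
      rw [Finset.card_image_of_injOn (fun x hx y hy => hinj x hx y hy), hFk e he,
        Fintype.card_fin]
    have hiimg : i ∈ e.image c := by rw [himg]; exact Finset.mem_univ i
    obtain ⟨x, hxe, hcx⟩ := Finset.mem_image.mp hiimg
    rw [Finset.card_eq_one]
    refine ⟨x, ?_⟩
    ext w
    simp only [Finset.mem_filter, Finset.mem_singleton]
    constructor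
    · rintro ⟨hw, hcw⟩
      exact hinj w hw x hxe (hcw.trans hcx.symm)
    · rintro rfl
      exact ⟨hxe, hcx⟩
  obtain ⟨X, hXclq⟩ := hX
  have hXcard : X.card = k + 1 := hXclq.card_eq
  have hXpair : ∀ u ∈ X, ∀ v ∈ X, u ≠ v → ∃ e ∈ F, u ∈ e ∧ v ∈ e := by
    intro u hu v hv huv
    exact ((hadj u v).mp (hXclq.isClique hu hv huv)).2
  -- Step 2: minimal uncovered subset
  set 𝒴 := X.powerset.filter (fun Y => ∀ e ∈ F, ¬ Y ⊆ e) with h𝒴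
  have hX𝒴 : X ∈ 𝒴 := by
    rw [h𝒴, Finset.mem_filter, Finset.mem_powerset]
    refine ⟨subset_rfl, ?_⟩
    intro e he hsub
    have := Finset.card_le_card hsub
    rw [hXcard, hFk e he] at this
    omega
  obtain ⟨Y, hYmem, hYmin⟩ := Finset.exists_min_image 𝒴 Finset.card ⟨X, hX𝒴⟩
  rw [h𝒴, Finset.mem_filter, Finset.mem_powerset] at hYmem
  obtain ⟨hYX, hYP⟩ := hYmem
  have hYup : Y.card ≤ k + 1 := hXcard ▸ Finset.card_le_card hYX
  have hYlow : 3 ≤ Y.card := by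
    by_contra hlow
    push_neg at hlow
    obtain ⟨Y₂, hYY₂, hY₂X, hY₂card⟩ := Finset.exists_subsuperset_card_eq (n := 2)
      hYX (by omega) (by omega)
    have hY₂c : Y₂.card = 2 := by omega
    obtain ⟨u, w, huw, hY₂⟩ := Finset.card_eq_two.mp hY₂c
    obtain ⟨e, he, hue, hwe⟩ := hXpair u (hY₂X (hY₂ ▸ by simp)) w (hY₂X (hY₂ ▸ by simp)) huw
    refine hYP e he (hYY₂.trans ?_)
    rw [hY₂]
    intro z hz
    rcases Finset.mem_insert.mp hz with rfl | hz'
    · exact hue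
    · rw [Finset.mem_singleton.mp hz']
      exact hwe
  refine ⟨X, hXclq, Y, hYX, hYlow, hYup, hYP, ?_⟩
  intro Z hZ
  by_contra hno
  push_neg at hno
  have hZ𝒴 : Z ∈ 𝒴 := by
    rw [h𝒴, Finset.mem_filter, Finset.mem_powerset]
    exact ⟨hZ.subset.trans hYX, hno⟩
  have := hYmin Z hZ𝒴
  have := Finset.card_lt_card hZ
  omega
end

section
/- Let G be a 3-partite graph with parts A, B, C (all edges run between distinct parts). Construct the k-graph H (k \geq 3) on V(G) together with new vertices v_1,...,v_{k-2}, with edges: e \cup {v_1,...,v_{k-2}} for each e \in E(G), and {a,b,c} \cup ({v_1,...,v_{k-2}} \setminus {v_i}) for each (a,b,c) \in A \times B \times C and each 1 \leq i \leq k-2. Then the minimum number of edges whose removal from G destroys all triangles with one vertex in each of A, B, C equals the minimum number of edges whose removal from H destroys all copies of the complete k-graph on k+1 vertices with one vertex in each of A, B, C, {v_1},...,{v_{k-2}}. -/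
open Finset

/-- The new vertices `v_1, ..., v_{k-2}` of the gadget. -/
def allNew {V : Type*} [DecidableEq V] (k : ℕ) : Finset (V ⊕ Fin (k - 2)) :=
  (Finset.univ : Finset (Fin (k - 2))).image Sum.inr

/-- The `k`-graph `H` built from the 3-partite graph `G` with parts `A`, `B`, `C`:
edges `e ∪ {v_1,...,v_{k-2}}` for `e ∈ E(G)`, and `{a,b,c} ∪ ({v_1,...,v_{k-2}} \ {v_i})`
for `(a,b,c) ∈ A × B × C` and `1 ≤ i ≤ k-2`. -/
def gadgetH {V : Type*} [DecidableEq V] (k : ℕ) (A B C : Finset V)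
    (G : Finset (Finset V)) : Finset (Finset (V ⊕ Fin (k - 2))) :=
  G.image (fun e => e.image Sum.inl ∪ allNew k) ∪
    (A ×ˢ B ×ˢ C ×ˢ (Finset.univ : Finset (Fin (k - 2)))).image
      (fun p => ({Sum.inl p.1, Sum.inl p.2.1, Sum.inl p.2.2.1} : Finset (V ⊕ Fin (k - 2))) ∪
        (allNew k).erase (Sum.inr p.2.2.2))

section
variable {V : Type*} [DecidableEq V]

lemma inl_not_allNew {k : ℕ} (v : V) : Sum.inl v ∉ allNew (V := V) k := by
  simp [allNew]

lemma pre_type1 {k : ℕ} (e : Finset V) :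
    (e.image Sum.inl ∪ allNew (V := V) k).preimage Sum.inl Sum.inl_injective.injOn = e := by
  ext v; simp [allNew]

lemma pre_type2 {k : ℕ} (a b c : V) (i : Fin (k - 2)) :
    (({Sum.inl a, Sum.inl b, Sum.inl c} : Finset (V ⊕ Fin (k - 2))) ∪
      (allNew k).erase (Sum.inr i)).preimage Sum.inl Sum.inl_injective.injOn = {a, b, c} := by
  ext v; simp [allNew]

lemma pair_image {k : ℕ} (b c : V) :
    ({b, c} : Finset V).image (Sum.inl : V → V ⊕ Fin (k-2)) = {Sum.inl b, Sum.inl c} := by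
  simp

lemma triple_card {a b c : V} {A B C : Finset V} (hAB : Disjoint A B) (hAC : Disjoint A C)
    (hBC : Disjoint B C) (ha : a ∈ A) (hb : b ∈ B) (hc : c ∈ C) :
    ({a, b, c} : Finset V).card = 3 := by
  have hab : a ≠ b := fun h => disjoint_left.mp hAB ha (h ▸ hb)
  have hac : a ≠ c := fun h => disjoint_left.mp hAC ha (h ▸ hc)
  have hbc : b ≠ c := fun h => disjoint_left.mp hBC hb (h ▸ hc)
  rw [card_insert_of_notMem (by simp [hab, hac]), card_insert_of_notMem (by simp [hbc]),
    card_singleton]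

/-- a type-1 shaped set is in gadgetH iff the pair is in G, when endpoints distinct. -/
lemma type1_mem_iff {k : ℕ} {A B C : Finset V} {G : Finset (Finset V)} {u w : V}
    (hAB : Disjoint A B) (hAC : Disjoint A C) (hBC : Disjoint B C) (huw : u ≠ w) :
    ({Sum.inl u, Sum.inl w} : Finset (V ⊕ Fin (k-2))) ∪ allNew k ∈ gadgetH k A B C G ↔
      ({u, w} : Finset V) ∈ G := by
  constructor
  · intro h
    simp only [gadgetH, mem_union, mem_image, Finset.mem_product] at h
    rcases h with ⟨e, he, heq⟩ | ⟨p, hp, heq⟩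
    · have := pre_type1 (k := k) e
      rw [heq, ← pair_image (k := k) u w, pre_type1] at this
      rwa [← this] at he
    · exfalso
      have h2 := pre_type2 (k := k) p.1 p.2.1 p.2.2.1 p.2.2.2
      rw [heq, ← pair_image (k := k) u w, pre_type1] at h2
      have h3 := triple_card hAB hAC hBC hp.1 hp.2.1 hp.2.2.1
      rw [← h2] at h3
      have h4 : ({u, w} : Finset V).card = 2 := card_pair huw
      omega
  · intro h
    simp only [gadgetH, mem_union, mem_image]
    exact Or.inl ⟨{u, w}, h, by rw [pair_image]⟩

end
section
variable {V : Type*} [DecidableEq V]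

lemma eraseS_a {k : ℕ} {a b c : V} (h1 : a ≠ b) (h2 : a ≠ c) :
    ((({Sum.inl a, Sum.inl b, Sum.inl c} : Finset (V ⊕ Fin (k-2))) ∪ allNew k).erase (Sum.inl a))
      = ({b, c} : Finset V).image Sum.inl ∪ allNew k := by
  have := inl_not_allNew (k := k) a
  ext x
  simp only [mem_erase, mem_union, mem_insert, mem_singleton, mem_image, pair_image]
  aesop

lemma eraseS_b {k : ℕ} {a b c : V} (h1 : b ≠ a) (h2 : b ≠ c) :
    ((({Sum.inl a, Sum.inl b, Sum.inl c} : Finset (V ⊕ Fin (k-2))) ∪ allNew k).erase (Sum.inl b))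
      = ({a, c} : Finset V).image Sum.inl ∪ allNew k := by
  have := inl_not_allNew (k := k) b
  ext x
  simp only [mem_erase, mem_union, mem_insert, mem_singleton, mem_image, pair_image]
  aesop

lemma eraseS_c {k : ℕ} {a b c : V} (h1 : c ≠ a) (h2 : c ≠ b) :
    ((({Sum.inl a, Sum.inl b, Sum.inl c} : Finset (V ⊕ Fin (k-2))) ∪ allNew k).erase (Sum.inl c))
      = ({a, b} : Finset V).image Sum.inl ∪ allNew k := by
  have := inl_not_allNew (k := k) c
  ext x
  simp only [mem_erase, mem_union, mem_insert, mem_singleton, mem_image, pair_image]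
  aesop

lemma eraseS_i {k : ℕ} (a b c : V) (i : Fin (k-2)) :
    ((({Sum.inl a, Sum.inl b, Sum.inl c} : Finset (V ⊕ Fin (k-2))) ∪ allNew k).erase (Sum.inr i))
      = ({Sum.inl a, Sum.inl b, Sum.inl c} : Finset (V ⊕ Fin (k-2))) ∪ (allNew k).erase (Sum.inr i) := by
  ext x
  simp only [mem_erase, mem_union, mem_insert, mem_singleton]
  aesop

end
section
variable {V : Type*} [DecidableEq V]

noncomputable def psi (A B : Finset V) (k : ℕ) (f : Finset (V ⊕ Fin (k - 2))) : Finset V :=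
  let t := f.preimage Sum.inl Sum.inl_injective.injOn
  if t.card = 2 then t else (t ∩ A) ∪ (t ∩ B)

lemma psi_type1 {k : ℕ} {A B : Finset V} {b c : V} (hbc : b ≠ c) :
    psi A B k (({b, c} : Finset V).image Sum.inl ∪ allNew k) = {b, c} := by
  simp only [psi]
  rw [pre_type1, if_pos (card_pair hbc)]

lemma psi_type2 {k : ℕ} {A B C : Finset V} (hAB : Disjoint A B) (hAC : Disjoint A C)
    (hBC : Disjoint B C) {a b c : V} (ha : a ∈ A) (hb : b ∈ B) (hc : c ∈ C) (i : Fin (k - 2)) :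
    psi A B k (({Sum.inl a, Sum.inl b, Sum.inl c} : Finset (V ⊕ Fin (k-2))) ∪
      (allNew k).erase (Sum.inr i)) = {a, b} := by
  have hbA : b ∉ A := fun h => disjoint_left.mp hAB h hb
  have hcA : c ∉ A := fun h => disjoint_left.mp hAC h hc
  have haB : a ∉ B := fun h => disjoint_left.mp hAB ha h
  have hcB : c ∉ B := fun h => disjoint_left.mp hBC h hc
  have h3 := triple_card hAB hAC hBC ha hb hc
  simp only [psi]
  rw [pre_type2, h3, if_neg (by norm_num)]
  ext x
  simp only [mem_union, mem_inter, mem_insert, mem_singleton]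
  constructor
  · rintro (⟨(rfl|rfl|rfl), h⟩ | ⟨(rfl|rfl|rfl), h⟩) <;> tauto
  · rintro (rfl | rfl) <;> tauto

end
section
variable {V : Type*} [DecidableEq V]

lemma dir_GH {k : ℕ} {A B C : Finset V} (hAB : Disjoint A B) (hAC : Disjoint A C)
    (hBC : Disjoint B C) {G E : Finset (Finset V)} (hE : E ⊆ G)
    (hcov : ∀ a ∈ A, ∀ b ∈ B, ∀ c ∈ C,
      ¬(({a, b} : Finset V) ∈ G \ E ∧ ({b, c} : Finset V) ∈ G \ E ∧
        ({a, c} : Finset V) ∈ G \ E)) :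
    ∃ E' ⊆ gadgetH k A B C G, E'.card = E.card ∧ ∀ a ∈ A, ∀ b ∈ B, ∀ c ∈ C,
      ∃ x ∈ ({Sum.inl a, Sum.inl b, Sum.inl c} : Finset (V ⊕ Fin (k - 2))) ∪ allNew k,
        (({Sum.inl a, Sum.inl b, Sum.inl c} : Finset (V ⊕ Fin (k - 2))) ∪ allNew k).erase x
          ∉ gadgetH k A B C G \ E' := by
  refine ⟨E.image (fun e => e.image Sum.inl ∪ allNew k),
    by intro x hx; simp only [gadgetH, mem_union]; exact Or.inl (image_subset_image hE hx), ?_, ?_⟩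
  · refine card_image_of_injOn fun e1 _ e2 _ h => ?_
    have := pre_type1 (k := k) e1
    rw [h, pre_type1] at this
    exact this.symm
  · intro a ha b hb c hc
    have hab : a ≠ b := fun h => disjoint_left.mp hAB ha (h ▸ hb)
    have hac : a ≠ c := fun h => disjoint_left.mp hAC ha (h ▸ hc)
    have hbc : b ≠ c := fun h => disjoint_left.mp hBC hb (h ▸ hc)
    have key : ∀ u w : V, u ≠ w → ¬(({u, w} : Finset V) ∈ G \ E) →
        ({u, w} : Finset V).image Sum.inl ∪ allNew k ∉ gadgetH k A B C G \
          E.image (fun e => e.image Sum.inl ∪ allNew k) := by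
      intro u w huw hno
      rw [mem_sdiff] at hno ⊢
      push_neg at hno ⊢
      intro hH
      rw [pair_image, type1_mem_iff hAB hAC hBC huw] at hH
      exact mem_image.mpr ⟨{u, w}, hno hH, rfl⟩
    by_cases h1 : ({a, b} : Finset V) ∈ G \ E
    · by_cases h2 : ({b, c} : Finset V) ∈ G \ E
      · have h3 : ¬(({a, c} : Finset V) ∈ G \ E) := fun h3 => hcov a ha b hb c hc ⟨h1, h2, h3⟩
        exact ⟨Sum.inl b, by simp, by rw [eraseS_b hab.symm hbc]; exact key a c hac h3⟩
      · exact ⟨Sum.inl a, by simp, by rw [eraseS_a hab hac]; exact key b c hbc h2⟩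
    · exact ⟨Sum.inl c, by simp, by rw [eraseS_c hac.symm hbc.symm]; exact key a b hab h1⟩

lemma dir_HG {k : ℕ} {A B C : Finset V} (hAB : Disjoint A B) (hAC : Disjoint A C)
    (hBC : Disjoint B C) {G : Finset (Finset V)} {E' : Finset (Finset (V ⊕ Fin (k - 2)))}
    (hE' : E' ⊆ gadgetH k A B C G)
    (hcov : ∀ a ∈ A, ∀ b ∈ B, ∀ c ∈ C,
      ∃ x ∈ ({Sum.inl a, Sum.inl b, Sum.inl c} : Finset (V ⊕ Fin (k - 2))) ∪ allNew k,
        (({Sum.inl a, Sum.inl b, Sum.inl c} : Finset (V ⊕ Fin (k - 2))) ∪ allNew k).erase x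
          ∉ gadgetH k A B C G \ E') :
    ∃ E ⊆ G, E.card ≤ E'.card ∧ ∀ a ∈ A, ∀ b ∈ B, ∀ c ∈ C,
      ¬(({a, b} : Finset V) ∈ G \ E ∧ ({b, c} : Finset V) ∈ G \ E ∧
        ({a, c} : Finset V) ∈ G \ E) := by
  refine ⟨E'.image (psi A B k) ∩ G, inter_subset_right,
    (card_le_card inter_subset_left).trans card_image_le, ?_⟩
  set E := E'.image (psi A B k) ∩ G with hEdef
  rintro a ha b hb c hc ⟨h1, h2, h3⟩
  have hab : a ≠ b := fun h => disjoint_left.mp hAB ha (h ▸ hb)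
  have hac : a ≠ c := fun h => disjoint_left.mp hAC ha (h ▸ hc)
  have hbc : b ≠ c := fun h => disjoint_left.mp hBC hb (h ▸ hc)
  rw [mem_sdiff] at h1 h2 h3
  obtain ⟨x, hxS, hxf⟩ := hcov a ha b hb c hc
  have getE' : ∀ f : Finset (V ⊕ Fin (k - 2)), f ∈ gadgetH k A B C G →
      f ∉ gadgetH k A B C G \ E' → f ∈ E' := by
    intro f hf hnf
    by_contra h
    exact hnf (mem_sdiff.mpr ⟨hf, h⟩)
  rcases mem_union.mp hxS with hx | hx
  · rcases mem_insert.mp hx with rfl | hx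
    · rw [eraseS_a hab hac] at hxf
      have hfH : ({b, c} : Finset V).image Sum.inl ∪ allNew k ∈ gadgetH k A B C G := by
        rw [pair_image, type1_mem_iff hAB hAC hBC hbc]; exact h2.1
      have hfE' := getE' _ hfH hxf
      have : ({b, c} : Finset V) ∈ E := by
        rw [hEdef, mem_inter]
        exact ⟨mem_image.mpr ⟨_, hfE', psi_type1 hbc⟩, h2.1⟩
      exact h2.2 this
    · rcases mem_insert.mp hx with rfl | hx
      · rw [eraseS_b hab.symm hbc] at hxf
        have hfH : ({a, c} : Finset V).image Sum.inl ∪ allNew k ∈ gadgetH k A B C G := by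
          rw [pair_image, type1_mem_iff hAB hAC hBC hac]; exact h3.1
        have hfE' := getE' _ hfH hxf
        have : ({a, c} : Finset V) ∈ E := by
          rw [hEdef, mem_inter]
          exact ⟨mem_image.mpr ⟨_, hfE', psi_type1 hac⟩, h3.1⟩
        exact h3.2 this
      · rw [mem_singleton] at hx
        subst hx
        rw [eraseS_c hac.symm hbc.symm] at hxf
        have hfH : ({a, b} : Finset V).image Sum.inl ∪ allNew k ∈ gadgetH k A B C G := by
          rw [pair_image, type1_mem_iff hAB hAC hBC hab]; exact h1.1
        have hfE' := getE' _ hfH hxf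
        have : ({a, b} : Finset V) ∈ E := by
          rw [hEdef, mem_inter]
          exact ⟨mem_image.mpr ⟨_, hfE', psi_type1 hab⟩, h1.1⟩
        exact h1.2 this
  · simp only [allNew, mem_image, mem_univ, true_and] at hx
    obtain ⟨i, rfl⟩ := hx
    rw [eraseS_i] at hxf
    have hfH : ({Sum.inl a, Sum.inl b, Sum.inl c} : Finset (V ⊕ Fin (k-2))) ∪
        (allNew k).erase (Sum.inr i) ∈ gadgetH k A B C G := by
      simp only [gadgetH, mem_union, mem_image]
      exact Or.inr ⟨(a, b, c, i), by simp [Finset.mem_product, ha, hb, hc], rfl⟩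
    have hfE' := getE' _ hfH hxf
    have : ({a, b} : Finset V) ∈ E := by
      rw [hEdef, mem_inter]
      exact ⟨mem_image.mpr ⟨_, hfE', psi_type2 hAB hAC hBC ha hb hc i⟩, h1.1⟩
    exact h1.2 this

end

/-- The minimum number of edges destroying all canonical triangles of `G` equals the
minimum number of edges destroying all canonical copies of `K_{k+1}^{(k)}` in `H`. -/
theorem stmt10 {V : Type*} [DecidableEq V] (k : ℕ) (hk : 3 ≤ k)
    (A B C : Finset V) (hAB : Disjoint A B) (hAC : Disjoint A C) (hBC : Disjoint B C)
    (G : Finset (Finset V))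
    (hG : ∀ e ∈ G, (∃ a ∈ A, ∃ b ∈ B, e = {a, b}) ∨ (∃ b ∈ B, ∃ c ∈ C, e = {b, c}) ∨
      (∃ a ∈ A, ∃ c ∈ C, e = {a, c})) :
    sInf {m | ∃ E ⊆ G, E.card = m ∧ ∀ a ∈ A, ∀ b ∈ B, ∀ c ∈ C,
        ¬(({a, b} : Finset V) ∈ G \ E ∧ ({b, c} : Finset V) ∈ G \ E ∧
          ({a, c} : Finset V) ∈ G \ E)} =
      sInf {m | ∃ E ⊆ gadgetH k A B C G, E.card = m ∧ ∀ a ∈ A, ∀ b ∈ B, ∀ c ∈ C,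
        ∃ x ∈ ({Sum.inl a, Sum.inl b, Sum.inl c} : Finset (V ⊕ Fin (k - 2))) ∪ allNew k,
          (({Sum.inl a, Sum.inl b, Sum.inl c} : Finset (V ⊕ Fin (k - 2))) ∪ allNew k).erase x
            ∉ gadgetH k A B C G \ E} := by
  have hLne : Set.Nonempty {m | ∃ E ⊆ G, E.card = m ∧ ∀ a ∈ A, ∀ b ∈ B, ∀ c ∈ C,
      ¬(({a, b} : Finset V) ∈ G \ E ∧ ({b, c} : Finset V) ∈ G \ E ∧
        ({a, c} : Finset V) ∈ G \ E)} :=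
    ⟨G.card, G, Subset.refl _, rfl, fun a _ b _ c _ h => by simp at h⟩
  have hRne : Set.Nonempty {m | ∃ E ⊆ gadgetH k A B C G, E.card = m ∧ ∀ a ∈ A, ∀ b ∈ B, ∀ c ∈ C,
      ∃ x ∈ ({Sum.inl a, Sum.inl b, Sum.inl c} : Finset (V ⊕ Fin (k - 2))) ∪ allNew k,
        (({Sum.inl a, Sum.inl b, Sum.inl c} : Finset (V ⊕ Fin (k - 2))) ∪ allNew k).erase x
          ∉ gadgetH k A B C G \ E} :=
    ⟨(gadgetH k A B C G).card, gadgetH k A B C G, Subset.refl _, rfl,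
      fun a _ b _ c _ => ⟨Sum.inl a, by simp, by simp⟩⟩
  apply le_antisymm
  · obtain ⟨E', hE'sub, hE'card, hE'cov⟩ := Nat.sInf_mem hRne
    obtain ⟨E, hEsub, hEcard, hEcov⟩ := dir_HG hAB hAC hBC hE'sub hE'cov
    exact le_trans (Nat.sInf_le ⟨E, hEsub, rfl, hEcov⟩) (hE'card ▸ hEcard)
  · obtain ⟨E, hEsub, hEcard, hEcov⟩ := Nat.sInf_mem hLne
    obtain ⟨E', hE'sub, hE'card, hE'cov⟩ := dir_GH hAB hAC hBC hEsub hEcov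
    exact le_trans (Nat.sInf_le ⟨E', hE'sub, rfl, hE'cov⟩) (le_of_eq (hE'card.trans hEcard))
end

section
/- Let L be a core k-graph and G an L-partite k-graph, with H an L-free subgraph of G having ex_L(G) edges. Then the b-blowup H' of H is an L-free subgraph of the b-blowup G' of G with exactly b^k \cdot ex_L(G) edges; consequently ex_L(G') \geq b^k \cdot ex_L(G). -/
open Finset

/-- `f` is a homomorphism from the hypergraph `G` to the hypergraph `L`. -/
def IsHom {α β : Type*} [DecidableEq β] (G : Finset (Finset α)) (L : Finset (Finset β))
    (f : α → β) : Prop :=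
  ∀ e ∈ G, e.image f ∈ L

/-- `L` is a core: every homomorphism from `L` to itself is an isomorphism. -/
def IsCore {α : Type*} [DecidableEq α] (L : Finset (Finset α)) : Prop :=
  ∀ f : α → α, IsHom L L f →
    Function.Bijective f ∧ ∀ e : Finset α, e ∈ L ↔ e.image f ∈ L

/-- `G` contains a copy of `F`. -/
def HasCopy {α β : Type*} [DecidableEq β] (F : Finset (Finset α)) (G : Finset (Finset β)) : Prop :=
  ∃ f : α → β, Function.Injective f ∧ ∀ e ∈ F, e.image f ∈ G

/-- The `b`-blowup of `G`. -/
def blowup {V : Type*} [DecidableEq V] [Fintype V] (b : ℕ) (G : Finset (Finset V)) :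
    Finset (Finset (V × Fin b)) :=
  Finset.univ.filter (fun S => S.image Prod.fst ∈ G ∧ S.card = (S.image Prod.fst).card)

/-- The maximum number of edges of an `L`-free subgraph of `G`. -/
noncomputable def exL {α V : Type*} [DecidableEq V]
    (L : Finset (Finset α)) (G : Finset (Finset V)) : ℕ :=
  sSup {m | ∃ H ⊆ G, ¬ HasCopy L H ∧ H.card = m}


lemma fiber_card {V : Type} [Fintype V] [DecidableEq V] (b : ℕ) (e : Finset V) :
    (Finset.univ.filter (fun S : Finset (V × Fin b) =>
      S.image Prod.fst = e ∧ S.card = e.card)).card = b ^ e.card := by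
  have key := Finset.card_bij
    (i := fun (g : {x // x ∈ e} → Fin b) (_ : g ∈ (Finset.univ : Finset _)) =>
      e.attach.image (fun v => (v.1, g v)))
    (t := Finset.univ.filter (fun S : Finset (V × Fin b) =>
      S.image Prod.fst = e ∧ S.card = e.card)) ?_ ?_ ?_
  · rw [← key, Finset.card_univ, Fintype.card_fun, Fintype.card_fin, Fintype.card_coe]
  · intro g _
    have hinj : Function.Injective (fun v : {x // x ∈ e} => (v.1, g v)) := by
      intro v w h
      simp only [Prod.mk.injEq] at h
      exact Subtype.ext h.1
    simp only [Finset.mem_filter, Finset.mem_univ, true_and]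
    constructor
    · rw [Finset.image_image]
      exact e.attach_image_val
    · rw [Finset.card_image_of_injective _ hinj, Finset.card_attach]
  · intro g₁ _ g₂ _ h
    funext v
    have h' : e.attach.image (fun w => (w.1, g₁ w)) = e.attach.image (fun w => (w.1, g₂ w)) := h
    have hv : (v.1, g₁ v) ∈ e.attach.image (fun w => (w.1, g₂ w)) := by
      rw [← h']; exact Finset.mem_image_of_mem _ (Finset.mem_attach _ _)
    obtain ⟨w, _, hw⟩ := Finset.mem_image.mp hv
    simp only [Prod.mk.injEq] at hw
    have : w = v := Subtype.ext hw.1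
    rw [← hw.2, this]
  · intro S hS
    simp only [Finset.mem_filter, Finset.mem_univ, true_and] at hS
    obtain ⟨h1, h2⟩ := hS
    have hex : ∀ v : {x // x ∈ e}, ∃ j : Fin b, (v.1, j) ∈ S := by
      intro v
      have : v.1 ∈ S.image Prod.fst := h1 ▸ v.2
      obtain ⟨⟨x, j⟩, hp, hpv⟩ := Finset.mem_image.mp this
      have hx : x = v.1 := hpv
      exact ⟨j, hx ▸ hp⟩
    choose g hg using hex
    refine ⟨g, Finset.mem_univ _, ?_⟩
    have hinj : Function.Injective (fun v : {x // x ∈ e} => (v.1, g v)) := by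
      intro v w h
      simp only [Prod.mk.injEq] at h
      exact Subtype.ext h.1
    apply Finset.eq_of_subset_of_card_le
    · intro p hp
      obtain ⟨w, _, hw⟩ := Finset.mem_image.mp hp
      exact hw ▸ hg w
    · rw [Finset.card_image_of_injective _ hinj, Finset.card_attach, h2]

lemma blowup_card {V : Type} [Fintype V] [DecidableEq V] (b k : ℕ) (H : Finset (Finset V))
    (hk : ∀ e ∈ H, e.card = k) : (blowup b H).card = b ^ k * H.card := by
  have heq : blowup b H = H.biUnion (fun e => Finset.univ.filter
      (fun S : Finset (V × Fin b) => S.image Prod.fst = e ∧ S.card = e.card)) := by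
    ext S
    simp only [blowup, Finset.mem_filter, Finset.mem_univ, true_and, Finset.mem_biUnion]
    constructor
    · rintro ⟨h1, h2⟩; exact ⟨_, h1, rfl, h2⟩
    · rintro ⟨e, he, rfl, h2⟩; exact ⟨he, h2⟩
  rw [heq, Finset.card_biUnion]
  · rw [Finset.sum_congr rfl (fun e he => by rw [fiber_card, hk e he])]
    rw [Finset.sum_const, smul_eq_mul, mul_comm]
  · intro x hx y hy hxy
    rw [Function.onFun, Finset.disjoint_left]
    intro S hS1 hS2
    simp only [Finset.mem_filter] at hS1 hS2
    exact hxy (hS1.2.1 ▸ hS2.2.1)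

theorem subgraph_blowup {V : Type} [Fintype V] [DecidableEq V] (b : ℕ)
    {H G : Finset (Finset V)} (hHG : H ⊆ G) : blowup b H ⊆ blowup b G := by
  intro S hS
  simp only [blowup, Finset.mem_filter, Finset.mem_univ, true_and] at *
  exact ⟨hHG hS.1, hS.2⟩

/-- If `L` is a core, `G` is `L`-partite, and `H` is an extremal `L`-free subgraph of `G`,
then the `b`-blowup of `H` is an `L`-free subgraph of the `b`-blowup of `G` with exactly
`b^k · ex_L(G)` edges; consequently `ex_L(G') ≥ b^k · ex_L(G)`. -/
theorem stmt14 {V α : Type} [Fintype V] [DecidableEq V] [Fintype α] [DecidableEq α]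
    (k b : ℕ) (hb : 0 < b)
    (L : Finset (Finset α)) (hLk : ∀ e ∈ L, e.card = k) (hcore : IsCore L)
    (G : Finset (Finset V)) (hGk : ∀ e ∈ G, e.card = k)
    (φ : V → α) (hφ : IsHom G L φ)
    (H : Finset (Finset V)) (hHG : H ⊆ G) (hHfree : ¬ HasCopy L H)
    (hHmax : H.card = exL L G) :
    blowup b H ⊆ blowup b G ∧ ¬ HasCopy L (blowup b H) ∧
      (blowup b H).card = b ^ k * exL L G ∧
      b ^ k * exL L G ≤ exL L (blowup b G) := by
  have hsub : blowup b H ⊆ blowup b G := subgraph_blowup b hHG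
  have hfree : ¬ HasCopy L (blowup b H) := by
    rintro ⟨f, finj, hf⟩
    apply hHfree
    set g : α → V := fun x => (f x).1 with hg
    have hgh : ∀ e ∈ L, e.image g ∈ H := by
      intro e he
      have := hf e he
      simp only [blowup, Finset.mem_filter, Finset.mem_univ, true_and] at this
      have himg : (e.image f).image Prod.fst = e.image g := by
        rw [Finset.image_image]; rfl
      rw [himg] at this
      exact this.1
    have hφg : IsHom L L (φ ∘ g) := by
      intro e he
      have : (e.image g).image φ ∈ L := hφ _ (hHG (hgh e he))
      rwa [Finset.image_image] at this
    obtain ⟨hbij, -⟩ := hcore (φ ∘ g) hφg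
    have ginj : Function.Injective g := by
      intro x y hxy
      exact hbij.1 (by simp [Function.comp, hxy])
    exact ⟨g, ginj, hgh⟩
  have hHk : ∀ e ∈ H, e.card = k := fun e he => hGk e (hHG he)
  have hcard : (blowup b H).card = b ^ k * exL L G := by
    rw [blowup_card b k H hHk, hHmax]
  refine ⟨hsub, hfree, hcard, ?_⟩
  have hmem : b ^ k * exL L G ∈
      {m | ∃ H' ⊆ blowup b G, ¬ HasCopy L H' ∧ H'.card = m} :=
    ⟨blowup b H, hsub, hfree, hcard⟩
  have hbdd : BddAbove {m | ∃ H' ⊆ blowup b G, ¬ HasCopy L H' ∧ H'.card = m} := by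
    refine ⟨(blowup b G).card, ?_⟩
    rintro m ⟨H', hH', -, rfl⟩
    exact Finset.card_le_card hH'
  exact le_csSup hbdd hmem
end
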